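/- arXiv:2211.02562 — 9 statements merged into one kernel-verified Lean document; each statement's English description precedes it below -/
import Mathlib

section
/- In the abstract regularization setting, if the target has the additional regularity ū = ι w̄ for some w̄ ∈ X, then the regularization error satisfies ‖ι u_ϱ − ū‖_H ≤ √ϱ · ‖w̄‖_s, where ‖u‖_s := √(s(u,u)). Moreover, the stronger combined bound ‖ι u_ϱ − ū‖_H² + ϱ ‖u_ϱ − w̄‖_s² ≤ ϱ ‖w̄‖_s ‖u_ϱ − w̄‖_s holds. -/
open RealInnerProductSpace

/-- Cauchy–Schwarz for a symmetric positive-semidefinite bilinear form. -/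
lemma psd_cauchy_schwarz {X : Type*} [AddCommGroup X] [Module ℝ X]
    (s : X →ₗ[ℝ] X →ₗ[ℝ] ℝ)
    (hsym : ∀ u v : X, s u v = s v u)
    (hpsd : ∀ u : X, 0 ≤ s u u) (w e : X) :
    (s w e) ^ 2 ≤ s w w * s e e := by
  have key : ∀ t : ℝ, 0 ≤ s e e * (t * t) + (2 * s w e) * t + s w w := by
    intro t
    have h := hpsd (w + t • e)
    simp only [map_add, map_smul, LinearMap.add_apply, LinearMap.smul_apply,
      smul_eq_mul] at h
    rw [hsym e w] at h
    nlinarith [h]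
  have hd := discrim_le_zero key
  rw [discrim] at hd
  nlinarith

/-- Regularization error estimate (3.5): for `ū = ι w̄` with `w̄ ∈ X`,
`‖ι u_ϱ − ū‖_H ≤ √ϱ ‖w̄‖_s`, together with the stronger combined bound
`‖ι u_ϱ − ū‖_H² + ϱ‖u_ϱ − w̄‖_s² ≤ ϱ‖w̄‖_s‖u_ϱ − w̄‖_s`. -/
theorem regularization_error_energy_target
    {H X : Type*}
    [NormedAddCommGroup H] [InnerProductSpace ℝ H] [CompleteSpace H]
    [AddCommGroup X] [Module ℝ X]
    (ι : X →ₗ[ℝ] H) (s : X →ₗ[ℝ] X →ₗ[ℝ] ℝ)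
    (hsym : ∀ u v : X, s u v = s v u)
    (hpsd : ∀ u : X, 0 ≤ s u u)
    (ϱ : ℝ) (hϱ : 0 < ϱ) (ubar : H) (u : X)
    (hu : ∀ v : X, ϱ * s u v + ⟪ι u, ι v⟫ = ⟪ubar, ι v⟫)
    (wbar : X) (hwbar : ubar = ι wbar) :
    ‖ι u - ubar‖ ≤ Real.sqrt ϱ * Real.sqrt (s wbar wbar) ∧
    ‖ι u - ubar‖ ^ 2 + ϱ * Real.sqrt (s (u - wbar) (u - wbar)) ^ 2 ≤
      ϱ * Real.sqrt (s wbar wbar) * Real.sqrt (s (u - wbar) (u - wbar)) := by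
  set e := u - wbar with he
  set a := Real.sqrt (s e e) with ha
  set b := Real.sqrt (s wbar wbar) with hb
  have hee : 0 ≤ s e e := hpsd e
  have hww : 0 ≤ s wbar wbar := hpsd wbar
  have ha2 : a ^ 2 = s e e := Real.sq_sqrt hee
  have hb2 : b ^ 2 = s wbar wbar := Real.sq_sqrt hww
  have ha0 : 0 ≤ a := Real.sqrt_nonneg _
  have hb0 : 0 ≤ b := Real.sqrt_nonneg _
  -- key identity: ‖ι u - ubar‖² + ϱ s(e,e) = -ϱ s(wbar, e)
  have hιe : ι e = ι u - ubar := by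
    rw [he, map_sub, hwbar]
  have hkey := hu e
  rw [hwbar] at hkey
  have hinner : ⟪ι u, ι e⟫ - ⟪ι wbar, ι e⟫ = ‖ι u - ubar‖ ^ 2 := by
    rw [← inner_sub_left, ← map_sub, ← he, hιe]
    exact real_inner_self_eq_norm_sq _
  have hsu : s u e = s e e + s wbar e := by
    have h' : u = e + wbar := by rw [he]; abel
    rw [h', map_add, LinearMap.add_apply]
  have hid : ‖ι u - ubar‖ ^ 2 + ϱ * s e e = -(ϱ * s wbar e) := by
    nlinarith [hkey, hinner, hsu]
  -- Cauchy–Schwarz: -s wbar e ≤ b * a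
  have hcs : (s wbar e) ^ 2 ≤ s wbar wbar * s e e :=
    psd_cauchy_schwarz s hsym hpsd wbar e
  have hcs2 : (s wbar e) ^ 2 ≤ (b * a) ^ 2 := by
    rw [mul_pow, ha2, hb2]; exact hcs
  have hba : 0 ≤ b * a := mul_nonneg hb0 ha0
  have hcs' : -(s wbar e) ≤ b * a := by
    nlinarith [hcs2, hba, sq_nonneg (b * a + s wbar e)]
  -- combined bound
  have hcomb : ‖ι u - ubar‖ ^ 2 + ϱ * a ^ 2 ≤ ϱ * b * a := by
    rw [ha2, hid]
    nlinarith [hcs']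
  refine ⟨?_, hcomb⟩
  -- first bound
  have hnorm0 : (0:ℝ) ≤ ‖ι u - ubar‖ := norm_nonneg _
  have h1 : ‖ι u - ubar‖ ^ 2 ≤ ϱ * b ^ 2 := by
    nlinarith [hcomb, sq_nonneg (a - b), hϱ.le]
  have h2 : ‖ι u - ubar‖ ≤ Real.sqrt (ϱ * b ^ 2) := by
    rw [← Real.sqrt_sq hnorm0]
    exact Real.sqrt_le_sqrt h1
  calc ‖ι u - ubar‖ ≤ Real.sqrt (ϱ * b ^ 2) := h2
    _ = Real.sqrt ϱ * b := by
        rw [Real.sqrt_mul hϱ.le, Real.sqrt_sq hb0]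
end

section
/- In the abstract regularization setting, if the target has the additional regularity ū = ι w̄ for some w̄ ∈ X, then the regularization error satisfies the energy-norm bound ‖u_ϱ − w̄‖_s ≤ ‖w̄‖_s, where ‖u‖_s := √(s(u,u)). -/
open RealInnerProductSpace

/-- Regularization error estimate (3.6): for `ū = ι w̄` with `w̄ ∈ X`,
the energy-norm bound `‖u_ϱ − w̄‖_s ≤ ‖w̄‖_s` holds. -/
theorem regularization_error_energy_norm
    {H X : Type*}
    [NormedAddCommGroup H] [InnerProductSpace ℝ H] [CompleteSpace H]
    [AddCommGroup X] [Module ℝ X]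
    (ι : X →ₗ[ℝ] H) (s : X →ₗ[ℝ] X →ₗ[ℝ] ℝ)
    (hsym : ∀ u v : X, s u v = s v u)
    (hpsd : ∀ u : X, 0 ≤ s u u)
    (ϱ : ℝ) (hϱ : 0 < ϱ) (ubar : H) (u : X)
    (hu : ∀ v : X, ϱ * s u v + ⟪ι u, ι v⟫ = ⟪ubar, ι v⟫)
    (wbar : X) (hwbar : ubar = ι wbar) :
    Real.sqrt (s (u - wbar) (u - wbar)) ≤ Real.sqrt (s wbar wbar) := by
  set e := u - wbar with he
  set a := s e e with ha
  set b := s wbar e with hb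
  set c := s wbar wbar with hc
  have ha0 : 0 ≤ a := hpsd e
  have hc0 : 0 ≤ c := hpsd wbar
  -- test with v = e
  have hue : ϱ * s u e + ⟪ι u, ι e⟫ = ⟪ι wbar, ι e⟫ := by rw [← hwbar]; exact hu e
  have hie : ι e = ι u - ι wbar := by rw [he, map_sub]
  have hkey : ϱ * s u e = - ‖ι e‖ ^ 2 := by
    have : ϱ * s u e = ⟪ι wbar - ι u, ι e⟫ := by
      rw [inner_sub_left]; linarith [hue]
    rw [this, show ι wbar - ι u = -(ι e) by rw [hie]; abel, inner_neg_left,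
      real_inner_self_eq_norm_sq]
  have hsue : s u e ≤ 0 := by
    nlinarith [sq_nonneg ‖ι e‖]
  have hab : a ≤ -b := by
    have h1 : s e = s u - s wbar := by rw [he, map_sub]
    have h2 : a = s u e - b := by rw [ha, hb, h1, LinearMap.sub_apply]
    linarith
  -- Cauchy–Schwarz: b^2 ≤ c * a
  have hcs : b ^ 2 ≤ c * a := by
    have hq : ∀ t : ℝ, 0 ≤ c * (t * t) + (2 * b) * t + a := by
      intro t
      have h := hpsd (t • wbar + e)
      have hexp : s (t • wbar + e) (t • wbar + e) = c * (t * t) + (2 * b) * t + a := by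
        simp only [map_add, map_smul, LinearMap.add_apply, LinearMap.smul_apply,
          smul_eq_mul, hc, hb, ha]
        rw [hsym e wbar]
        ring
      linarith [hexp ▸ h]
    have hd := discrim_le_zero hq
    rw [discrim] at hd
    nlinarith
  -- from a ≤ -b ≤ |b| and b² ≤ c a: a² ≤ c a, so a ≤ c
  have hac : a ≤ c := by
    rcases eq_or_lt_of_le ha0 with haz | hap
    · linarith
    · have ha2 : a ^ 2 ≤ b ^ 2 := by nlinarith
      nlinarith
  exact Real.sqrt_le_sqrt hac
end

section
/- In the abstract regularization setting, suppose the target has the additional regularity ū = ι w̄ for some w̄ ∈ X, and that there exists g ∈ H with s(w̄, v) = ⟨g, ι v⟩_H for all v ∈ X (i.e. S w̄ ∈ L²(Q)). Then the regularization error satisfies ‖ι u_ϱ − ū‖_H ≤ ϱ ‖g‖_H. -/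
open RealInnerProductSpace

/-- Regularization error estimate (3.7): for `ū = ι w̄` with `S w̄ ∈ L²(Q)`,
i.e. `s(w̄, v) = ⟨g, ι v⟩_H` for some `g ∈ H`, one has
`‖ι u_ϱ − ū‖_H ≤ ϱ ‖g‖_H`. -/
theorem regularization_error_L2_rate
    {H X : Type*}
    [NormedAddCommGroup H] [InnerProductSpace ℝ H] [CompleteSpace H]
    [AddCommGroup X] [Module ℝ X]
    (ι : X →ₗ[ℝ] H) (s : X →ₗ[ℝ] X →ₗ[ℝ] ℝ)
    (hsym : ∀ u v : X, s u v = s v u)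
    (hpsd : ∀ u : X, 0 ≤ s u u)
    (ϱ : ℝ) (hϱ : 0 < ϱ) (ubar : H) (u : X)
    (hu : ∀ v : X, ϱ * s u v + ⟪ι u, ι v⟫ = ⟪ubar, ι v⟫)
    (wbar : X) (hwbar : ubar = ι wbar)
    (g : H) (hg : ∀ v : X, s wbar v = ⟪g, ι v⟫) :
    ‖ι u - ubar‖ ≤ ϱ * ‖g‖ := by
  subst hwbar
  set e := u - wbar with he
  have hie : ι u - ι wbar = ι e := by rw [he, map_sub]
  rw [hie]
  have hue : u = e + wbar := by rw [he]; abel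
  have hsu : s u e = s e e + s wbar e := by
    rw [hue, map_add, LinearMap.add_apply]
  have key : ϱ * (s e e) + ϱ * ⟪g, ι e⟫ + ⟪ι e, ι e⟫ = 0 := by
    have h := hu e
    rw [hsu, hg e] at h
    have : ⟪ι u, ι e⟫ = ⟪ι e, ι e⟫ + ⟪ι wbar, ι e⟫ := by
      rw [hue, map_add, inner_add_left]
    rw [this] at h
    linarith
  have hnorm : ‖ι e‖ ^ 2 = ⟪ι e, ι e⟫ := (real_inner_self_eq_norm_sq (ι e)).symm
  have hcs : -⟪g, ι e⟫ ≤ ‖g‖ * ‖ι e‖ := by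
    have := abs_real_inner_le_norm g (ι e)
    have := neg_abs_le (⟪g, ι e⟫ : ℝ)
    linarith
  have hsq : ‖ι e‖ ^ 2 ≤ ϱ * ‖g‖ * ‖ι e‖ := by
    have h1 := mul_nonneg hϱ.le (hpsd e)
    have h2 := mul_le_mul_of_nonneg_left hcs hϱ.le
    nlinarith
  rcases eq_or_lt_of_le (norm_nonneg (ι e)) with h0 | h0
  · rw [← h0]
    exact mul_nonneg hϱ.le (norm_nonneg g)
  · have h1 : ‖ι e‖ * ‖ι e‖ ≤ ϱ * ‖g‖ * ‖ι e‖ := by rw [← sq]; exact hsq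
    exact le_of_mul_le_mul_right h1 h0
end

section
/- In the abstract regularization setting, suppose the target has the additional regularity ū = ι w̄ for some w̄ ∈ X, and that there exists g ∈ H with s(w̄, v) = ⟨g, ι v⟩_H for all v ∈ X (i.e. S w̄ ∈ L²(Q)). Then the regularization error satisfies the energy-norm bound ‖u_ϱ − w̄‖_s ≤ √ϱ · ‖g‖_H, where ‖u‖_s := √(s(u,u)). -/
open RealInnerProductSpace

/-- Regularization error estimate (3.8): for `ū = ι w̄` with `S w̄ ∈ L²(Q)`,
i.e. `s(w̄, v) = ⟨g, ι v⟩_H` for some `g ∈ H`, one has the energy-norm bound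
`‖u_ϱ − w̄‖_s ≤ √ϱ ‖g‖_H`. -/
theorem regularization_error_energy_rate
    {H X : Type*}
    [NormedAddCommGroup H] [InnerProductSpace ℝ H] [CompleteSpace H]
    [AddCommGroup X] [Module ℝ X]
    (ι : X →ₗ[ℝ] H) (s : X →ₗ[ℝ] X →ₗ[ℝ] ℝ)
    (hsym : ∀ u v : X, s u v = s v u)
    (hpsd : ∀ u : X, 0 ≤ s u u)
    (ϱ : ℝ) (hϱ : 0 < ϱ) (ubar : H) (u : X)
    (hu : ∀ v : X, ϱ * s u v + ⟪ι u, ι v⟫ = ⟪ubar, ι v⟫)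
    (wbar : X) (hwbar : ubar = ι wbar)
    (g : H) (hg : ∀ v : X, s wbar v = ⟪g, ι v⟫) :
    Real.sqrt (s (u - wbar) (u - wbar)) ≤ Real.sqrt ϱ * ‖g‖ := by
  set e := u - wbar with he
  have hιe : ι e = ι u - ι wbar := by simp [he]
  -- test equation with v = e
  have h1 : ϱ * s u e + ⟪ι u, ι e⟫ = ⟪ι wbar, ι e⟫ := by
    rw [← hwbar]; exact hu e
  have h2 : ϱ * s u e = - ‖ι e‖ ^ 2 := by
    have : ‖ι e‖ ^ 2 = ⟪ι e, ι e⟫ := (real_inner_self_eq_norm_sq (ι e)).symm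
    rw [this, hιe]
    have := h1
    rw [hιe] at this
    simp only [inner_sub_left, inner_sub_right] at this ⊢
    linarith [real_inner_comm (ι u) (ι wbar)]
  have hsee : s e e = s u e - s wbar e := by
    simp only [he, map_sub, LinearMap.sub_apply]
    rw [hsym wbar u]
  have h3 : ϱ * s e e = - ‖ι e‖ ^ 2 - ϱ * ⟪g, ι e⟫ := by
    rw [hsee, hg e]; ring_nf; linarith [h2]
  have hcs : ⟪g, ι e⟫ ≥ -(‖g‖ * ‖ι e‖) := by
    have := abs_real_inner_le_norm g (ι e)
    have := neg_abs_le (⟪g, ι e⟫ : ℝ)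
    linarith [abs_real_inner_le_norm g (ι e), neg_abs_le (⟪g, ι e⟫ : ℝ)]
  have h4 : ϱ * s e e ≤ - ‖ι e‖ ^ 2 + ϱ * (‖g‖ * ‖ι e‖) := by
    rw [h3]; nlinarith [hcs, hϱ.le]
  have h5' : ϱ * s e e ≤ ϱ * (ϱ * ‖g‖ ^ 2) := by
    nlinarith [sq_nonneg (‖ι e‖ - ϱ * ‖g‖ / 2),
      mul_nonneg (mul_nonneg hϱ.le hϱ.le) (sq_nonneg ‖g‖)]
  have h5 : s e e ≤ ϱ * ‖g‖ ^ 2 := le_of_mul_le_mul_left h5' hϱ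
  calc Real.sqrt (s e e) ≤ Real.sqrt (ϱ * ‖g‖ ^ 2) := Real.sqrt_le_sqrt h5
    _ = Real.sqrt ϱ * ‖g‖ := by
        rw [Real.sqrt_mul hϱ.le, Real.sqrt_sq (norm_nonneg g)]
end

section
/- In the abstract Galerkin setting, suppose additionally that the target has regularity ū = ι w̄ for some w̄ ∈ X. Then for every v_h ∈ X_h one has ϱ s(u_ϱ − u_{ϱh}, u_ϱ − u_{ϱh}) + ‖ι(u_ϱ − u_{ϱh})‖_H² ≤ 2 [ 2ϱ s(w̄, w̄) + ϱ s(w̄ − v_h, w̄ − v_h) + ‖ι(w̄ − v_h)‖_H² ]. -/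
open RealInnerProductSpace

/-- Key inequality chain in the proof of Theorem 4.1: for `ū = ι w̄`,
`ϱ s(u_ϱ−u_{ϱh}, u_ϱ−u_{ϱh}) + ‖ι(u_ϱ−u_{ϱh})‖² ≤
 2[2ϱ s(w̄,w̄) + ϱ s(w̄−v_h, w̄−v_h) + ‖ι(w̄−v_h)‖²]` for all `v_h ∈ X_h`. -/
theorem galerkin_error_chain_H1
    {H X : Type*}
    [NormedAddCommGroup H] [InnerProductSpace ℝ H] [CompleteSpace H]
    [AddCommGroup X] [Module ℝ X]
    (ι : X →ₗ[ℝ] H) (s : X →ₗ[ℝ] X →ₗ[ℝ] ℝ)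
    (hsym : ∀ u v : X, s u v = s v u)
    (hpsd : ∀ u : X, 0 ≤ s u u)
    (ϱ : ℝ) (hϱ : 0 < ϱ) (ubar : H)
    (u : X) (hu : ∀ v : X, ϱ * s u v + ⟪ι u, ι v⟫ = ⟪ubar, ι v⟫)
    (Xh : Submodule ℝ X)
    (uh : X) (huhXh : uh ∈ Xh)
    (huh : ∀ vh ∈ Xh, ϱ * s uh vh + ⟪ι uh, ι vh⟫ = ⟪ubar, ι vh⟫)
    (wbar : X) (hwbar : ubar = ι wbar) :
    ∀ vh ∈ Xh,
      ϱ * s (u - uh) (u - uh) + ‖ι (u - uh)‖ ^ 2 ≤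
        2 * (2 * ϱ * s wbar wbar + ϱ * s (wbar - vh) (wbar - vh) +
          ‖ι (wbar - vh)‖ ^ 2) := by
  intro vh hvh
  subst hwbar
  have h1 := hu (vh - uh)
  have h2 := huh (vh - uh) (Xh.sub_mem hvh huhXh)
  have h3 := hu (u - wbar)
  have f3 : 0 ≤ ϱ * s u u := mul_nonneg hϱ.le (hpsd u)
  have f4 : 0 ≤ ϱ * s (vh - uh) (vh - uh) := mul_nonneg hϱ.le (hpsd _)
  have f5 : (0:ℝ) ≤ ‖ι (vh - uh)‖ ^ 2 := sq_nonneg _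
  have f6 : 0 ≤ ϱ * s (u + vh - wbar - wbar) (u + vh - wbar - wbar) :=
    mul_nonneg hϱ.le (hpsd _)
  have f7 : (0:ℝ) ≤ ‖ι (u + vh - wbar - wbar)‖ ^ 2 := sq_nonneg _
  have f8 : (0:ℝ) ≤ ‖ι (u - wbar)‖ ^ 2 := sq_nonneg _
  have f9 : 0 ≤ ϱ * s wbar wbar := mul_nonneg hϱ.le (hpsd _)
  simp only [← real_inner_self_eq_norm_sq, map_sub, map_add, LinearMap.sub_apply,
    LinearMap.add_apply, inner_sub_left, inner_sub_right, inner_add_left, inner_add_right,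
    real_inner_comm, hsym] at h1 h2 h3 f4 f5 f6 f7 f8 ⊢
  linarith [h1, h2, h3, f3, f4, f5, f6, f7, f8, f9]
end

section
/- In the abstract Galerkin setting, suppose additionally that ū = ι w̄ for some w̄ ∈ X and that there exists g ∈ H with s(w̄, v) = ⟨g, ι v⟩_H for all v ∈ X (i.e. S w̄ ∈ L²(Q)). Then for every v_h ∈ X_h one has ϱ s(u_ϱ − u_{ϱh}, u_ϱ − u_{ϱh}) + ‖ι(u_ϱ − u_{ϱh})‖_H² ≤ 2 [ 2ϱ² ‖g‖_H² + ϱ s(w̄ − v_h, w̄ − v_h) + ‖ι(w̄ − v_h)‖_H² ]. -/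
open RealInnerProductSpace

/-- Second estimate of Corollary 4.2: for `ū = ι w̄` with `s(w̄,·) = ⟨g, ι ·⟩`,
`ϱ s(u_ϱ−u_{ϱh}, u_ϱ−u_{ϱh}) + ‖ι(u_ϱ−u_{ϱh})‖² ≤
 2[2ϱ²‖g‖² + ϱ s(w̄−v_h, w̄−v_h) + ‖ι(w̄−v_h)‖²]` for all `v_h ∈ X_h`. -/
theorem galerkin_error_chain_H2
    {H X : Type*}
    [NormedAddCommGroup H] [InnerProductSpace ℝ H] [CompleteSpace H]
    [AddCommGroup X] [Module ℝ X]
    (ι : X →ₗ[ℝ] H) (s : X →ₗ[ℝ] X →ₗ[ℝ] ℝ)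
    (hsym : ∀ u v : X, s u v = s v u)
    (hpsd : ∀ u : X, 0 ≤ s u u)
    (ϱ : ℝ) (hϱ : 0 < ϱ) (ubar : H)
    (u : X) (hu : ∀ v : X, ϱ * s u v + ⟪ι u, ι v⟫ = ⟪ubar, ι v⟫)
    (Xh : Submodule ℝ X)
    (uh : X) (huhXh : uh ∈ Xh)
    (huh : ∀ vh ∈ Xh, ϱ * s uh vh + ⟪ι uh, ι vh⟫ = ⟪ubar, ι vh⟫)
    (wbar : X) (hwbar : ubar = ι wbar)
    (g : H) (hg : ∀ v : X, s wbar v = ⟪g, ι v⟫) :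
    ∀ vh ∈ Xh,
      ϱ * s (u - uh) (u - uh) + ‖ι (u - uh)‖ ^ 2 ≤
        2 * (2 * ϱ ^ 2 * ‖g‖ ^ 2 + ϱ * s (wbar - vh) (wbar - vh) +
          ‖ι (wbar - vh)‖ ^ 2) := by
  intro vh hvh
  -- the energy bilinear form
  set a : X → X → ℝ := fun x y => ϱ * s x y + ⟪ι x, ι y⟫ with ha_def
  have ha_symm : ∀ x y : X, a x y = a y x := by
    intro x y; simp only [ha_def, hsym x y, real_inner_comm (ι x) (ι y)]
  have ha_nonneg : ∀ x : X, 0 ≤ a x x := fun x =>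
    add_nonneg (mul_nonneg hϱ.le (hpsd x)) real_inner_self_nonneg
  have hnorm : ∀ x : X, ‖ι x‖ ^ 2 = ⟪ι x, ι x⟫ := fun x =>
    (real_inner_self_eq_norm_sq (ι x)).symm
  have hsubl : ∀ x y z : X, a (x - y) z = a x z - a y z := by
    intro x y z
    simp only [ha_def, map_sub, LinearMap.sub_apply, inner_sub_left]
    ring
  have hsubr : ∀ x y z : X, a z (x - y) = a z x - a z y := by
    intro x y z
    rw [ha_symm z (x - y), hsubl, ha_symm x z, ha_symm y z]
  -- expansion of a (x - y) (x - y)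
  have hexp : ∀ x y : X, a (x - y) (x - y) = a x x - 2 * a x y + a y y := by
    intro x y
    rw [hsubl, hsubr, hsubr, ha_symm y x]; ring
  -- Galerkin orthogonality
  have horth : ∀ wh ∈ Xh, a (u - uh) wh = 0 := by
    intro wh hwh
    have h1 := hu wh
    have h2 := huh wh hwh
    rw [hsubl]
    simp only [ha_def]
    linarith
  -- best approximation in the energy norm
  have hbest : a (u - uh) (u - uh) ≤ a (u - vh) (u - vh) := by
    have hid : u - vh = (u - uh) - (vh - uh) := by abel
    have h0 : a (u - uh) (vh - uh) = 0 := horth _ (Submodule.sub_mem _ hvh huhXh)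
    have hnn := ha_nonneg (vh - uh)
    have heq : a (u - vh) (u - vh) =
        a (u - uh) (u - uh) - 2 * a (u - uh) (vh - uh) + a (vh - uh) (vh - uh) := by
      rw [hid, hexp]
    linarith
  -- splitting: u - vh = (u - wbar) - (vh - wbar)
  have hsplit : a (u - vh) (u - vh) ≤
      2 * a (u - wbar) (u - wbar) + 2 * a (wbar - vh) (wbar - vh) := by
    have hid : u - vh = (u - wbar) - (vh - wbar) := by abel
    have hid2 : a (vh - wbar) (vh - wbar) = a (wbar - vh) (wbar - vh) := by
      rw [hexp, hexp, ha_symm vh wbar]; ring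
    have hneg : a (u - wbar) (wbar - vh) = -(a (u - wbar) (vh - wbar)) := by
      rw [hsubr, hsubr]; ring
    have h := ha_nonneg ((u - wbar) - (wbar - vh))
    rw [hexp] at h
    have heq : a (u - vh) (u - vh) =
        a (u - wbar) (u - wbar) - 2 * a (u - wbar) (vh - wbar) +
          a (vh - wbar) (vh - wbar) := by
      rw [hid, hexp]
    linarith
  -- regularization estimate: a (u - wbar) (u - wbar) ≤ ϱ² ‖g‖²
  have hreg : a (u - wbar) (u - wbar) ≤ ϱ ^ 2 * ‖g‖ ^ 2 := by
    set r := u - wbar with hr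
    have hid : a r r = -(ϱ * ⟪g, ι r⟫) := by
      have h1 := hu r
      have h2 : s wbar r = ⟪g, ι r⟫ := hg r
      have h3 : ϱ * s r r = ϱ * s u r - ϱ * ⟪g, ι r⟫ := by
        rw [hr]
        have : s (u - wbar) r = s u r - s wbar r := by
          simp [map_sub, LinearMap.sub_apply]
        rw [this, h2]; ring
      have h4 : ⟪ι r, ι r⟫ = ⟪ι u, ι r⟫ - ⟪ι wbar, ι r⟫ := by
        rw [hr, map_sub, inner_sub_left]
      have h5 : ⟪ubar, ι r⟫ = ⟪ι wbar, ι r⟫ := by rw [hwbar]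
      simp only [ha_def]
      rw [h5] at h1
      linarith
    have hcs : -(ϱ * ⟪g, ι r⟫) ≤ ϱ * (‖g‖ * ‖ι r‖) := by
      have h1 := abs_real_inner_le_norm g (ι r)
      have h2 := neg_abs_le (⟪g, ι r⟫ : ℝ)
      nlinarith
    have hn2 : ‖ι r‖ ^ 2 ≤ ϱ * (‖g‖ * ‖ι r‖) := by
      have : ‖ι r‖ ^ 2 ≤ a r r := by
        simp only [ha_def, hnorm]
        nlinarith [mul_nonneg hϱ.le (hpsd r)]
      linarith [hid ▸ this, hcs]
    have hx : ‖ι r‖ ≤ ϱ * ‖g‖ := by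
      rcases eq_or_lt_of_le (norm_nonneg (ι r)) with h | h
      · rw [← h]; positivity
      · nlinarith
    calc a r r ≤ ϱ * (‖g‖ * ‖ι r‖) := by linarith [hid ▸ hcs]
      _ ≤ ϱ * (‖g‖ * (ϱ * ‖g‖)) := by
          have hg0 : (0:ℝ) ≤ ‖g‖ := norm_nonneg g
          nlinarith
      _ = ϱ ^ 2 * ‖g‖ ^ 2 := by ring
  -- conclude
  have hLHS : ϱ * s (u - uh) (u - uh) + ‖ι (u - uh)‖ ^ 2 = a (u - uh) (u - uh) := by
    simp only [ha_def, hnorm]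
  have hRHS : ϱ * s (wbar - vh) (wbar - vh) + ‖ι (wbar - vh)‖ ^ 2 =
      a (wbar - vh) (wbar - vh) := by
    simp only [ha_def, hnorm]
  have hg2 : (0:ℝ) ≤ ϱ ^ 2 * ‖g‖ ^ 2 := by positivity
  rw [hLHS]
  nlinarith [hbest, hsplit, hreg]
end

section
/- Let H be a real Hilbert space, X_h a real vector space, ι : X_h → H a linear map, and s̃ : X_h × X_h → ℝ a bilinear form satisfying s̃(v,v) ≥ 0 for all v ∈ X_h. Let ϱ > 0, ū ∈ H, and let ũ ∈ X_h satisfy the perturbed variational equation ϱ s̃(ũ, v_h) + ⟨ι ũ, ι v_h⟩_H = ⟨ū, ι v_h⟩_H for all v_h ∈ X_h. Then ‖ι ũ − ū‖_H ≤ ‖ū‖_H. -/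
open RealInnerProductSpace

/-- Estimate (4.8) of Lemma 4.3 in abstract form: the solution of the perturbed
discrete variational formulation satisfies `‖ι ũ − ū‖_H ≤ ‖ū‖_H`. -/
theorem perturbed_galerkin_stability
    {H Xh : Type*}
    [NormedAddCommGroup H] [InnerProductSpace ℝ H] [CompleteSpace H]
    [AddCommGroup Xh] [Module ℝ Xh]
    (ι : Xh →ₗ[ℝ] H) (st : Xh →ₗ[ℝ] Xh →ₗ[ℝ] ℝ)
    (hpsd : ∀ v : Xh, 0 ≤ st v v)
    (ϱ : ℝ) (hϱ : 0 < ϱ) (ubar : H)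
    (ut : Xh)
    (hut : ∀ vh : Xh, ϱ * st ut vh + ⟪ι ut, ι vh⟫ = ⟪ubar, ι vh⟫) :
    ‖ι ut - ubar‖ ≤ ‖ubar‖ := by
  have key := hut ut
  have hself : ⟪ι ut, ι ut⟫ = ‖ι ut‖ ^ 2 := real_inner_self_eq_norm_sq (ι ut)
  have hsq : ‖ι ut - ubar‖ ^ 2 = ‖ι ut‖ ^ 2 - 2 * ⟪ι ut, ubar⟫ + ‖ubar‖ ^ 2 := by
    rw [← real_inner_self_eq_norm_sq, ← real_inner_self_eq_norm_sq,
      ← real_inner_self_eq_norm_sq]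
    simp [inner_sub_sub_self]
    rw [real_inner_comm ubar]
    linarith [norm_sub_sq_real (ι ut) ubar, real_inner_comm ubar (ι ut)]
  have hcomm : ⟪ubar, ι ut⟫ = ⟪ι ut, ubar⟫ := real_inner_comm _ _
  have h1 : ‖ι ut - ubar‖ ^ 2 ≤ ‖ubar‖ ^ 2 := by
    nlinarith [hpsd ut, mul_nonneg hϱ.le (hpsd ut)]
  calc ‖ι ut - ubar‖ = Real.sqrt (‖ι ut - ubar‖ ^ 2) := by
        rw [Real.sqrt_sq (norm_nonneg _)]
    _ ≤ Real.sqrt (‖ubar‖ ^ 2) := Real.sqrt_le_sqrt h1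
    _ = ‖ubar‖ := Real.sqrt_sq (norm_nonneg _)
end

section
/- Let H be a real Hilbert space, X_h a real vector space, ι : X_h → H a linear map, and let s, s̃ : X_h × X_h → ℝ be bilinear forms with s̃(v,v) ≥ 0 for all v ∈ X_h. Let ϱ > 0 and ū ∈ H, and suppose u_h ∈ X_h satisfies ϱ s(u_h, v_h) + ⟨ι u_h, ι v_h⟩_H = ⟨ū, ι v_h⟩_H for all v_h ∈ X_h, while ũ ∈ X_h satisfies ϱ s̃(ũ, v_h) + ⟨ι ũ, ι v_h⟩_H = ⟨ū, ι v_h⟩_H for all v_h ∈ X_h. Then ‖ι(ũ − u_h)‖_H² ≤ ϱ [ s(u_h, ũ − u_h) − s̃(u_h, ũ − u_h) ]. -/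
open RealInnerProductSpace

/-- Central perturbation (Strang-type) estimate in the proof of Lemma 4.3:
`‖ι(ũ − u_h)‖_H² ≤ ϱ [ s(u_h, ũ − u_h) − s̃(u_h, ũ − u_h) ]`. -/
theorem strang_perturbation_estimate
    {H Xh : Type*}
    [NormedAddCommGroup H] [InnerProductSpace ℝ H] [CompleteSpace H]
    [AddCommGroup Xh] [Module ℝ Xh]
    (ι : Xh →ₗ[ℝ] H)
    (s st : Xh →ₗ[ℝ] Xh →ₗ[ℝ] ℝ)
    (hpsd : ∀ v : Xh, 0 ≤ st v v)
    (ϱ : ℝ) (hϱ : 0 < ϱ) (ubar : H)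
    (uh : Xh)
    (huh : ∀ vh : Xh, ϱ * s uh vh + ⟪ι uh, ι vh⟫ = ⟪ubar, ι vh⟫)
    (ut : Xh)
    (hut : ∀ vh : Xh, ϱ * st ut vh + ⟪ι ut, ι vh⟫ = ⟪ubar, ι vh⟫) :
    ‖ι (ut - uh)‖ ^ 2 ≤ ϱ * (s uh (ut - uh) - st uh (ut - uh)) := by
  set e := ut - uh with he
  have h1 := huh e
  have h2 := hut e
  have hie : ⟪ι e, ι e⟫ = ⟪ι ut, ι e⟫ - ⟪ι uh, ι e⟫ := by
    rw [he, map_sub, inner_sub_left]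
  have hdiff : ϱ * st ut e - ϱ * s uh e + ⟪ι e, ι e⟫ = 0 := by linarith
  have hnorm : ‖ι e‖ ^ 2 = ⟪ι e, ι e⟫ := (real_inner_self_eq_norm_sq _).symm
  have hst : st ut e = st uh e + st e e := by
    have : ut = uh + e := by rw [he]; abel
    rw [this, map_add]; simp
  have hpos : 0 ≤ ϱ * st e e := mul_nonneg hϱ.le (hpsd e)
  rw [hnorm]
  nlinarith [hdiff, hst]
end

section
/- In the abstract regularization setting, if the target has the additional regularity ū = ι w̄ for some w̄ ∈ X, then the combined estimate ‖ι u_ϱ − ū‖_H² + ϱ s(u_ϱ − w̄, u_ϱ − w̄) ≤ ϱ s(w̄, w̄ − u_ϱ) holds; in particular both ‖ι u_ϱ − ū‖_H² + ϱ ‖u_ϱ − w̄‖_s² ≤ ϱ ‖w̄‖_s ‖u_ϱ − w̄‖_s and, if moreover there exists g ∈ H with s(w̄, v) = ⟨g, ι v⟩_H for all v ∈ X, ‖ι u_ϱ − ū‖_H² + ϱ ‖u_ϱ − w̄‖_s² ≤ ϱ ‖g‖_H ‖ι u_ϱ − ū‖_H follow, where ‖u‖_s := √(s(u,u)). -/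
open RealInnerProductSpace

/-- Cauchy–Schwarz for a symmetric positive-semidefinite bilinear form. -/
lemma bilin_cauchy_schwarz {X : Type*} [AddCommGroup X] [Module ℝ X]
    (s : X →ₗ[ℝ] X →ₗ[ℝ] ℝ)
    (hsym : ∀ u v : X, s u v = s v u)
    (hpsd : ∀ u : X, 0 ≤ s u u) (x y : X) :
    s x y ≤ Real.sqrt (s x x) * Real.sqrt (s y y) := by
  have key : ∀ t : ℝ, 0 ≤ (s y y) * (t * t) + (2 * s x y) * t + s x x := by
    intro t
    have h := hpsd (x + t • y)
    simp only [map_add, map_smul, LinearMap.add_apply, LinearMap.smul_apply,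
      smul_eq_mul] at h
    rw [← hsym x y] at h
    nlinarith [h]
  have hd := discrim_le_zero key
  rw [discrim] at hd
  have hsq : (s x y) ^ 2 ≤ s x x * s y y := by nlinarith
  calc s x y ≤ |s x y| := le_abs_self _
    _ = Real.sqrt ((s x y) ^ 2) := (Real.sqrt_sq_eq_abs _).symm
    _ ≤ Real.sqrt (s x x * s y y) := Real.sqrt_le_sqrt hsq
    _ = Real.sqrt (s x x) * Real.sqrt (s y y) := Real.sqrt_mul (hpsd x) _

/-- Central identity in the proof of Theorem 3.3: for `ū = ι w̄` one has
`‖ι u_ϱ − ū‖² + ϱ s(u_ϱ−w̄, u_ϱ−w̄) ≤ ϱ s(w̄, w̄−u_ϱ)`; in particular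
`‖ι u_ϱ − ū‖² + ϱ‖u_ϱ−w̄‖_s² ≤ ϱ‖w̄‖_s‖u_ϱ−w̄‖_s`, and if `s(w̄,·) = ⟨g, ι ·⟩`
then `‖ι u_ϱ − ū‖² + ϱ‖u_ϱ−w̄‖_s² ≤ ϱ‖g‖‖ι u_ϱ − ū‖`. -/
theorem regularization_central_identity
    {H X : Type*}
    [NormedAddCommGroup H] [InnerProductSpace ℝ H] [CompleteSpace H]
    [AddCommGroup X] [Module ℝ X]
    (ι : X →ₗ[ℝ] H) (s : X →ₗ[ℝ] X →ₗ[ℝ] ℝ)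
    (hsym : ∀ u v : X, s u v = s v u)
    (hpsd : ∀ u : X, 0 ≤ s u u)
    (ϱ : ℝ) (hϱ : 0 < ϱ) (ubar : H) (u : X)
    (hu : ∀ v : X, ϱ * s u v + ⟪ι u, ι v⟫ = ⟪ubar, ι v⟫)
    (wbar : X) (hwbar : ubar = ι wbar) :
    (‖ι u - ubar‖ ^ 2 + ϱ * s (u - wbar) (u - wbar) ≤
       ϱ * s wbar (wbar - u)) ∧
    (‖ι u - ubar‖ ^ 2 +
       ϱ * Real.sqrt (s (u - wbar) (u - wbar)) ^ 2 ≤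
       ϱ * Real.sqrt (s wbar wbar) * Real.sqrt (s (u - wbar) (u - wbar))) ∧
    (∀ g : H, (∀ v : X, s wbar v = ⟪g, ι v⟫) →
       ‖ι u - ubar‖ ^ 2 +
         ϱ * Real.sqrt (s (u - wbar) (u - wbar)) ^ 2 ≤
         ϱ * ‖g‖ * ‖ι u - ubar‖) := by
  -- the norm squared equals ϱ * s u (wbar - u)
  have hnorm : ‖ι u - ubar‖ ^ 2 = ϱ * s u (wbar - u) := by
    have h := hu (wbar - u)
    rw [hwbar] at h
    have key : ϱ * s u (wbar - u) = ⟪ι wbar - ι u, ι wbar - ι u⟫ := by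
      simp only [map_sub, inner_sub_left, inner_sub_right] at h ⊢
      linarith
    rw [hwbar, ← norm_sub_rev, ← real_inner_self_eq_norm_sq, key]
  -- the central algebraic identity
  have hid : ‖ι u - ubar‖ ^ 2 + ϱ * s (u - wbar) (u - wbar) =
      ϱ * s wbar (wbar - u) := by
    rw [hnorm]
    simp only [map_sub, LinearMap.sub_apply]
    nlinarith [hsym u wbar]
  have h2 : ϱ * s wbar (wbar - u) ≤
      ϱ * Real.sqrt (s wbar wbar) * Real.sqrt (s (u - wbar) (u - wbar)) := by
    have hcs := bilin_cauchy_schwarz s hsym hpsd wbar (wbar - u)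
    have heq : s (wbar - u) (wbar - u) = s (u - wbar) (u - wbar) := by
      simp only [map_sub, LinearMap.sub_apply]
      nlinarith [hsym u wbar]
    rw [heq] at hcs
    have := mul_le_mul_of_nonneg_left hcs hϱ.le
    linarith [this]
  have hsqrt : Real.sqrt (s (u - wbar) (u - wbar)) ^ 2 = s (u - wbar) (u - wbar) :=
    Real.sq_sqrt (hpsd _)
  refine ⟨hid.le, ?_, ?_⟩
  · rw [hsqrt]; linarith [hid, h2]
  · intro g hg
    have h3 : ϱ * s wbar (wbar - u) ≤ ϱ * ‖g‖ * ‖ι u - ubar‖ := by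
      have := hg (wbar - u)
      have hι : ι (wbar - u) = -(ι u - ubar) := by rw [hwbar]; simp [map_sub]
      rw [hι] at this
      have hcs : ⟪g, -(ι u - ubar)⟫ ≤ ‖g‖ * ‖ι u - ubar‖ := by
        calc ⟪g, -(ι u - ubar)⟫ ≤ ‖g‖ * ‖-(ι u - ubar)‖ :=
              real_inner_le_norm _ _
          _ = ‖g‖ * ‖ι u - ubar‖ := by rw [norm_neg]
      rw [this]
      calc ϱ * ⟪g, -(ι u - ubar)⟫ ≤ ϱ * (‖g‖ * ‖ι u - ubar‖) :=
            mul_le_mul_of_nonneg_left hcs hϱ.le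
        _ = ϱ * ‖g‖ * ‖ι u - ubar‖ := by ring
    rw [hsqrt]; linarith [hid, h3]
end
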